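/- Assume 𝕍 is continuous, T-invariant, and T-ergodic. Then for every A in the invariant σ-algebra 𝓘 with 𝕍(A) > 0, there exists a T-invariant probability measure P' ∈ Θ₀ with P'(A) = 1. -/

import Mathlib

/-!
Ergodicity forces `𝕍(A) = 1`, so there are `Pₙ ∈ Θ` with `Pₙ(A) → 1`. The Cesàro averages
`(n+1)⁻¹ ∑_{k ≤ n} Pₙ ∘ T⁻ᵏ` are still dominated by `𝕍` (by `T`-invariance of `𝕍`), still give
mass `Pₙ(A)` to the invariant set `A`, and are invariant up to an error `(n+1)⁻¹`. Their
setwise limit along an ultrafilter finer than `atTop` is a finitely additive, `T`-invariant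
probability dominated by `𝕍` with value `1` on `A`; continuity of `𝕍` at `∅` makes it
countably additive, and maximality of `Θ` puts it in `Θ`.
-/

open MeasureTheory Filter Finset
open scoped Topology ENNReal

lemma exists_seq_mem_tendsto_biSup {α : Type*} {Θ : Set α} (hΘ : Θ.Nonempty) (f : α → ℝ≥0∞) :
    ∃ u : ℕ → α, (∀ n, u n ∈ Θ) ∧ Tendsto (fun n => f (u n)) atTop (𝓝 (⨆ a ∈ Θ, f a)) := by
  obtain ⟨x, -, hx, hxΘ⟩ := exists_seq_tendsto_sSup (hΘ.image f) (OrderTop.bddAbove _)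
  choose u hu hfu using hxΘ
  refine ⟨u, hu, ?_⟩
  rw [← sSup_image]
  exact hx.congr fun n => (hfu n).symm

namespace MeasureTheory

lemma isSetRing_measurableSet (Ω : Type*) [MeasurableSpace Ω] :
    IsSetRing {s : Set Ω | MeasurableSet s} where
  empty_mem := MeasurableSet.empty
  union_mem _ _ hs ht := hs.union ht
  sdiff_mem _ _ hs ht := hs.diff ht

variable {Ω : Type*} [MeasurableSpace Ω]

lemma apply_preimage_iterate_eq {β : Type*} {T : Ω → Ω} (hT : Measurable T) {V : Set Ω → β}
    (hV : ∀ s, MeasurableSet s → V (T ⁻¹' s) = V s) (k : ℕ) {s : Set Ω}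
    (hs : MeasurableSet s) : V (T^[k] ⁻¹' s) = V s := by
  induction k with
  | zero => rfl
  | succ k ih => rw [Function.iterate_succ, Set.preimage_comp, hV _ (hT.iterate k hs), ih]

theorem exists_measure_tendsto_of_le_of_tendsto_zero {ι : Type*} (𝒰 : Ultrafilter ι)
    (ν : ι → Measure Ω) [∀ i, IsProbabilityMeasure (ν i)] (V : Set Ω → ℝ≥0∞)
    (hνV : ∀ i s, MeasurableSet s → ν i s ≤ V s)
    (hV : ∀ s : ℕ → Set Ω, (∀ n, MeasurableSet (s n)) → Antitone s →
      (⋂ n, s n) = ∅ → Tendsto (fun n => V (s n)) atTop (𝓝 0)) :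
    ∃ μ : Measure Ω, ∀ s, MeasurableSet s → Tendsto (fun i => ν i s) 𝒰 (𝓝 (μ s)) := by
  set m : Set Ω → ℝ≥0∞ := fun s => (𝒰.map fun i => ν i s).lim
  have hm s : Tendsto (fun i => ν i s) 𝒰 (𝓝 (m s)) := (𝒰.map _).le_nhds_lim
  have hmV s (hs : MeasurableSet s) : m s ≤ V s :=
    le_of_tendsto (hm s) (.of_forall fun i => hνV i s hs)
  have hm_le_one s : m s ≤ 1 := le_of_tendsto (hm s) (.of_forall fun i => prob_le_one)
  have C := isSetRing_measurableSet Ω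
  let m' : AddContent ℝ≥0∞ {s : Set Ω | MeasurableSet s} :=
    C.addContent_of_union m (tendsto_nhds_unique (hm ∅) (by simp)) fun {s t} _ ht hst =>
      tendsto_nhds_unique (hm (s ∪ t))
        (((hm s).add (hm t)).congr fun i => (measure_union hst ht).symm)
  have hσ := addContent_iUnion_eq_sum_of_tendsto_zero C m'
    (fun s _ => ((hm_le_one s).trans_lt ENNReal.one_lt_top).ne)
    (fun s hs hanti hempty => tendsto_of_tendsto_of_tendsto_of_le_of_le tendsto_const_nhds
      (hV s hs hanti hempty) (fun _ => zero_le) fun n => hmV _ (hs n))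
  refine ⟨Measure.ofMeasurable (fun s _ => m' s) addContent_empty
    fun f hf hd => hσ hf (MeasurableSet.iUnion hf) hd, fun s hs => ?_⟩
  rw [Measure.ofMeasurable_apply s hs]
  exact hm s

namespace Measure

variable {T : Ω → Ω}

noncomputable def cesaroAverage (T : Ω → Ω) (P : Measure Ω) (n : ℕ) : Measure Ω :=
  (n : ℝ≥0∞)⁻¹ • ∑ k ∈ range n, P.map T^[k]

lemma cesaroAverage_apply (hT : Measurable T) (P : Measure Ω) (n : ℕ) {s : Set Ω}
    (hs : MeasurableSet s) :
    cesaroAverage T P n s = (n : ℝ≥0∞)⁻¹ * ∑ k ∈ range n, P (T^[k] ⁻¹' s) := by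
  simp [cesaroAverage, map_apply (hT.iterate _) hs]

lemma isProbabilityMeasure_cesaroAverage (hT : Measurable T) (P : Measure Ω)
    [IsProbabilityMeasure P] {n : ℕ} (hn : n ≠ 0) :
    IsProbabilityMeasure (cesaroAverage T P n) := by
  constructor
  rw [cesaroAverage_apply hT P n .univ]
  simp [ENNReal.inv_mul_cancel (Nat.cast_ne_zero.mpr hn) (ENNReal.natCast_ne_top n)]

lemma cesaroAverage_apply_le (hT : Measurable T) (P : Measure Ω) (n : ℕ) {s : Set Ω}
    (hs : MeasurableSet s) {c : ℝ≥0∞} (hc : ∀ k, P (T^[k] ⁻¹' s) ≤ c) :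
    cesaroAverage T P n s ≤ c := by
  rcases eq_or_ne n 0 with rfl | hn
  · simp [cesaroAverage]
  rw [cesaroAverage_apply hT P n hs]
  calc (n : ℝ≥0∞)⁻¹ * ∑ k ∈ range n, P (T^[k] ⁻¹' s) ≤ (n : ℝ≥0∞)⁻¹ * (n * c) := by
        gcongr
        simpa using sum_le_sum (s := range n) fun k _ => hc k
    _ = c := by
        rw [← mul_assoc, ENNReal.inv_mul_cancel (Nat.cast_ne_zero.mpr hn)
          (ENNReal.natCast_ne_top n), one_mul]

lemma cesaroAverage_apply_of_preimage_eq (hT : Measurable T) (P : Measure Ω) {n : ℕ}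
    (hn : n ≠ 0) {s : Set Ω} (hs : MeasurableSet s) (hTs : T ⁻¹' s = s) :
    cesaroAverage T P n s = P s := by
  have hiter k : T^[k] ⁻¹' s = s := by
    rw [Set.preimage_iterate_eq]; exact Function.iterate_fixed hTs k
  rw [cesaroAverage_apply hT P n hs]
  simp only [hiter, sum_const, card_range, nsmul_eq_mul, ← mul_assoc]
  rw [ENNReal.inv_mul_cancel (Nat.cast_ne_zero.mpr hn) (ENNReal.natCast_ne_top n), one_mul]

lemma sum_measure_preimage_iterate_preimage_add (P : Measure Ω) (n : ℕ) (s : Set Ω) :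
    ∑ k ∈ range n, P (T^[k] ⁻¹' (T ⁻¹' s)) + P s =
      ∑ k ∈ range n, P (T^[k] ⁻¹' s) + P (T^[n] ⁻¹' s) := by
  have h k : T^[k] ⁻¹' (T ⁻¹' s) = T^[k + 1] ⁻¹' s := by
    rw [Function.iterate_succ', Set.preimage_comp]
  simp_rw [h]
  rw [← sum_range_succ, sum_range_succ']
  simp

lemma cesaroAverage_apply_preimage_le (hT : Measurable T) (P : Measure Ω)
    [IsProbabilityMeasure P] (n : ℕ) {s : Set Ω} (hs : MeasurableSet s) :
    cesaroAverage T P n (T ⁻¹' s) ≤ cesaroAverage T P n s + (n : ℝ≥0∞)⁻¹ := by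
  rw [cesaroAverage_apply hT P n (hT hs), cesaroAverage_apply hT P n hs, ← mul_add_one]
  gcongr
  calc ∑ k ∈ range n, P (T^[k] ⁻¹' (T ⁻¹' s))
      ≤ ∑ k ∈ range n, P (T^[k] ⁻¹' (T ⁻¹' s)) + P s := le_self_add
    _ = ∑ k ∈ range n, P (T^[k] ⁻¹' s) + P (T^[n] ⁻¹' s) :=
        sum_measure_preimage_iterate_preimage_add P n s
    _ ≤ ∑ k ∈ range n, P (T^[k] ⁻¹' s) + 1 := by gcongr; exact prob_le_one

lemma cesaroAverage_apply_le_preimage (hT : Measurable T) (P : Measure Ω)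
    [IsProbabilityMeasure P] (n : ℕ) {s : Set Ω} (hs : MeasurableSet s) :
    cesaroAverage T P n s ≤ cesaroAverage T P n (T ⁻¹' s) + (n : ℝ≥0∞)⁻¹ := by
  rw [cesaroAverage_apply hT P n (hT hs), cesaroAverage_apply hT P n hs, ← mul_add_one]
  gcongr
  calc ∑ k ∈ range n, P (T^[k] ⁻¹' s)
      ≤ ∑ k ∈ range n, P (T^[k] ⁻¹' s) + P (T^[n] ⁻¹' s) := le_self_add
    _ = ∑ k ∈ range n, P (T^[k] ⁻¹' (T ⁻¹' s)) + P s :=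
        (sum_measure_preimage_iterate_preimage_add P n s).symm
    _ ≤ ∑ k ∈ range n, P (T^[k] ⁻¹' (T ⁻¹' s)) + 1 := by gcongr; exact prob_le_one

theorem measure_preimage_eq_of_tendsto_cesaroAverage (hT : Measurable T) {P : ℕ → Measure Ω}
    [∀ n, IsProbabilityMeasure (P n)] {l : Filter ℕ} [l.NeBot] (hl : l ≤ atTop)
    {μ : Measure Ω}
    (hμ : ∀ s, MeasurableSet s →
      Tendsto (fun n => cesaroAverage T (P n) (n + 1) s) l (𝓝 (μ s)))
    {s : Set Ω} (hs : MeasurableSet s) :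
    μ (T ⁻¹' s) = μ s := by
  have hε : Tendsto (fun n : ℕ => ((n + 1 : ℕ) : ℝ≥0∞)⁻¹) l (𝓝 0) :=
    (ENNReal.tendsto_inv_nat_nhds_zero.comp (tendsto_add_atTop_nat 1)).mono_left hl
  have hlim {a b : Set Ω} (ha : MeasurableSet a) (hb : MeasurableSet b)
      (hab : ∀ n, cesaroAverage T (P n) (n + 1) a ≤
        cesaroAverage T (P n) (n + 1) b + ((n + 1 : ℕ) : ℝ≥0∞)⁻¹) : μ a ≤ μ b :=
    le_of_tendsto_of_tendsto' (hμ a ha) (by simpa using (hμ b hb).add hε) hab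
  exact le_antisymm
    (hlim (hT hs) hs fun n => cesaroAverage_apply_preimage_le hT _ _ hs)
    (hlim hs (hT hs) fun n => cesaroAverage_apply_le_preimage hT _ _ hs)

end Measure

end MeasureTheory

/-- If `V` is continuous, `T`-invariant and `T`-ergodic, then for
every invariant measurable set `A` with `V(A) > 0` there is a `T`-invariant
`P' ∈ Θ₀` with `P'(A) = 1`. -/
theorem stmt_2 {Ω : Type*} [MeasurableSpace Ω] (T : Ω → Ω) (hT : Measurable T)
    (Θ : Set (Measure Ω)) (hΘne : Θ.Nonempty)
    (hprob : ∀ P ∈ Θ, IsProbabilityMeasure P)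
    (V : Set Ω → ℝ≥0∞)
    (hV : ∀ A : Set Ω, V A = ⨆ P ∈ Θ, P A)
    (hmax : ∀ P : Measure Ω, IsProbabilityMeasure P →
      (∀ A, MeasurableSet A → P A ≤ V A) → P ∈ Θ)
    (hcont : ∀ A : ℕ → Set Ω, (∀ n, MeasurableSet (A n)) → Antitone A →
      (⋂ n, A n) = ∅ → Tendsto (fun n => V (A n)) atTop (nhds 0))
    (hVinv : ∀ A : Set Ω, MeasurableSet A → V (T ⁻¹' A) = V A)
    (hVerg : ∀ A : Set Ω, MeasurableSet A → T ⁻¹' A = A → V A = 0 ∨ V A = 1) :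
    ∀ A : Set Ω, MeasurableSet A → T ⁻¹' A = A → 0 < V A →
      ∃ P' ∈ Θ, (∀ B : Set Ω, MeasurableSet B → P' (T ⁻¹' B) = P' B) ∧ P' A = 1 := by
  intro A hA hTA hVA
  have hPV (P) (hP : P ∈ Θ) (s : Set Ω) : P s ≤ V s :=
    (hV s).symm ▸ le_biSup (fun P : Measure Ω => P s) hP
  obtain ⟨P, hPΘ, hPA⟩ := exists_seq_mem_tendsto_biSup hΘne fun P : Measure Ω => P A
  rw [← hV, (hVerg A hA hTA).resolve_left hVA.ne'] at hPA
  have := fun n => hprob _ (hPΘ n)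
  set ν := fun n : ℕ => Measure.cesaroAverage T (P n) (n + 1)
  have := fun n => Measure.isProbabilityMeasure_cesaroAverage hT (P n) n.succ_ne_zero
  have hνV n s (hs : MeasurableSet s) : ν n s ≤ V s :=
    Measure.cesaroAverage_apply_le hT _ _ hs fun k =>
      (hPV _ (hPΘ n) _).trans_eq (apply_preimage_iterate_eq hT hVinv k hs)
  have h𝒰 : ((Ultrafilter.of atTop : Ultrafilter ℕ) : Filter ℕ) ≤ atTop := Ultrafilter.of_le _
  obtain ⟨μ, hμ⟩ := exists_measure_tendsto_of_le_of_tendsto_zero (.of atTop) ν V hνV hcont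
  have : IsProbabilityMeasure μ := ⟨tendsto_nhds_unique (hμ _ .univ) (by simp)⟩
  refine ⟨μ, hmax μ this fun s hs => le_of_tendsto (hμ s hs) (.of_forall fun n => hνV n s hs),
    fun B hB => Measure.measure_preimage_eq_of_tendsto_cesaroAverage hT h𝒰 hμ hB, ?_⟩
  refine tendsto_nhds_unique (hμ A hA) ((hPA.mono_left h𝒰).congr fun n => ?_)
  exact (Measure.cesaroAverage_apply_of_preimage_eq hT _ n.succ_ne_zero hA hTA).symm
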